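/- For τ ∈ [0,1], n ≥ 1, μ > 0 and z⁰ ∈ ℝ, the unique minimizer of z ↦ (1/n)ρ_τ(z) + (μ/2)(z − z⁰)² is z* = max{z⁰ − τ/(nμ), min(0, z⁰ + (1−τ)/(nμ))}. -/
import Mathlib


/-- Quantile check loss. -/
noncomputable def checkLoss (τ u : ℝ) : ℝ := if 0 ≤ u then τ * u else (τ - 1) * u

lemma check_prox_key (τ : ℝ) (hτ0 : 0 ≤ τ) (hτ1 : τ ≤ 1) (k mu z0 : ℝ)
    (hk : 0 < k) (hmu : 0 < mu) (z : ℝ) :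
    (k * mu) * checkLoss τ (max (z0 - τ * k) (min 0 (z0 + (1 - τ) * k))) +
      mu / 2 * ((max (z0 - τ * k) (min 0 (z0 + (1 - τ) * k))) - z0) ^ 2 +
      mu / 2 * (z - max (z0 - τ * k) (min 0 (z0 + (1 - τ) * k))) ^ 2
      ≤ (k * mu) * checkLoss τ z + mu / 2 * (z - z0) ^ 2 := by
  rcases lt_or_ge 0 (z0 - τ * k) with hA | hA
  · have hzs : max (z0 - τ * k) (min 0 (z0 + (1 - τ) * k)) = z0 - τ * k :=
      max_eq_left (le_of_lt (lt_of_le_of_lt (min_le_left _ _) hA))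
    rw [hzs]
    rcases le_or_gt 0 z with hz | hz
    · simp only [checkLoss, if_pos hz, if_pos (le_of_lt hA)]
      nlinarith [sq_nonneg (z - z0), sq_nonneg (z - (z0 - τ * k))]
    · simp only [checkLoss, if_neg (not_le.mpr hz), if_pos (le_of_lt hA)]
      nlinarith [mul_pos hk hmu, mul_nonneg (mul_pos hk hmu).le (neg_nonneg.mpr hz.le)]
  · rcases lt_or_ge (z0 + (1 - τ) * k) 0 with hB | hB
    · have hle : z0 - τ * k ≤ z0 + (1 - τ) * k := by nlinarith
      have hzs : max (z0 - τ * k) (min 0 (z0 + (1 - τ) * k)) = z0 + (1 - τ) * k := by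
        rw [min_eq_right hB.le, max_eq_right hle]
      rw [hzs]
      rcases le_or_gt 0 z with hz | hz
      · simp only [checkLoss, if_pos hz, if_neg (not_le.mpr hB)]
        nlinarith [mul_pos hk hmu, mul_nonneg (mul_pos hk hmu).le hz]
      · simp only [checkLoss, if_neg (not_le.mpr hz), if_neg (not_le.mpr hB)]
        nlinarith [sq_nonneg (z - z0)]
    · have hzs : max (z0 - τ * k) (min 0 (z0 + (1 - τ) * k)) = 0 := by
        rw [min_eq_left hB, max_eq_right hA]
      rw [hzs]
      rcases le_or_gt 0 z with hz | hz
      · simp only [checkLoss, if_pos hz, if_pos le_rfl]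
        nlinarith [mul_nonneg (mul_nonneg hz hmu.le) (by nlinarith : (0:ℝ) ≤ τ * k - z0)]
      · simp only [checkLoss, if_neg (not_le.mpr hz), if_pos le_rfl]
        nlinarith [mul_nonneg (mul_nonneg (neg_nonneg.mpr hz.le) hmu.le) hB]

theorem check_prox_unique_minimizer (τ : ℝ) (hτ : τ ∈ Set.Icc (0:ℝ) 1)
    (n : ℕ) (hn : 1 ≤ n) (mu z0 : ℝ) (hmu : 0 < mu) :
    (∀ z : ℝ,
      (1 / n) * checkLoss τ (max (z0 - τ / (n * mu)) (min 0 (z0 + (1 - τ) / (n * mu)))) +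
        mu / 2 * (max (z0 - τ / (n * mu)) (min 0 (z0 + (1 - τ) / (n * mu))) - z0) ^ 2
        ≤ (1 / n) * checkLoss τ z + mu / 2 * (z - z0) ^ 2) ∧
    (∀ z : ℝ,
      (∀ w : ℝ, (1 / n) * checkLoss τ z + mu / 2 * (z - z0) ^ 2
          ≤ (1 / n) * checkLoss τ w + mu / 2 * (w - z0) ^ 2) →
      z = max (z0 - τ / (n * mu)) (min 0 (z0 + (1 - τ) / (n * mu)))) := by
  obtain ⟨hτ0, hτ1⟩ := hτ
  have hn' : (0:ℝ) < n := by exact_mod_cast Nat.pos_of_ne_zero (by omega)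
  set k : ℝ := 1 / (n * mu) with hk_def
  have hk : 0 < k := by positivity
  have e1 : τ / (n * mu) = τ * k := by rw [hk_def]; ring
  have e2 : (1 - τ) / (n * mu) = (1 - τ) * k := by rw [hk_def]; ring
  have e3 : (1:ℝ) / n = k * mu := by
    rw [hk_def]; field_simp
  rw [e1, e2, e3]
  have key := check_prox_key τ hτ0 hτ1 k mu z0 hk hmu
  constructor
  · intro z
    have := key z
    nlinarith [sq_nonneg (z - max (z0 - τ * k) (min 0 (z0 + (1 - τ) * k)))]
  · intro z hmin
    set zs := max (z0 - τ * k) (min 0 (z0 + (1 - τ) * k)) with hzs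
    have h1 := hmin zs
    have h2 := key z
    have hsq : (z - zs) ^ 2 ≤ 0 := by nlinarith
    have : z - zs = 0 := by nlinarith [sq_nonneg (z - zs)]
    linarith
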